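/- (Family 3) Let Q = [[a,b],[c,d]] be an invertible 2×2 complex matrix with a ≠ 0, d ≠ 0 and a·conj(b) + c·conj(d) = 0. Let p, q ∈ ℂ satisfy |p|·|a|² = |d|² and |q|·|d|² = |a|². Let R be the 4×4 matrix with rows [0,0,0,p], [0,0,1,0], [0,1,0,0], [q,0,0,0], let A = Q ⊗ₖ Q, and let k ∈ ℂ with |k| = 1. Then k·A·R·A⁻¹·T is unitary and satisfies the braided Yang–Baxter equation. -/

import Mathlib

open Matrix Kronecker

/-- Identify `Fin 2 × Fin 2` with `Fin 4` using the basis ordering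
`v₀⊗v₀, v₀⊗v₁, v₁⊗v₀, v₁⊗v₁`. -/
def toFin4 : Fin 2 × Fin 2 → Fin 4 := fun p => ⟨2 * p.1.val + p.2.val, by omega⟩

/-- View an explicit `4 × 4` matrix as a matrix acting on `ℂ² ⊗ ℂ²`. -/
def m44 (M : Matrix (Fin 4) (Fin 4) ℂ) : Matrix (Fin 2 × Fin 2) (Fin 2 × Fin 2) ℂ :=
  M.submatrix toFin4 toFin4

/-- The swap matrix `T`, with `T (vᵢ ⊗ vⱼ) = vⱼ ⊗ vᵢ`. -/
def swapT : Matrix (Fin 2 × Fin 2) (Fin 2 × Fin 2) ℂ :=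
  m44 !![1, 0, 0, 0; 0, 0, 1, 0; 0, 1, 0, 0; 0, 0, 0, 1]

/-- The braided Yang–Baxter equation for a matrix acting on `ℂ² ⊗ ℂ²`. -/
def braidedYB (R : Matrix (Fin 2 × Fin 2) (Fin 2 × Fin 2) ℂ) : Prop :=
  let R12 := Matrix.reindex (Equiv.prodAssoc (Fin 2) (Fin 2) (Fin 2))
      (Equiv.prodAssoc (Fin 2) (Fin 2) (Fin 2)) (R ⊗ₖ (1 : Matrix (Fin 2) (Fin 2) ℂ))
  let R23 := (1 : Matrix (Fin 2) (Fin 2) ℂ) ⊗ₖ R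
  R12 * R23 * R12 = R23 * R12 * R23

/-!
The factor `A = Q ⊗ Q` commutes with the swap `T`, so `M = k • A (R T) A⁻¹`, where
`R T` is the braid `B` with corners `p, q` and identity middle block. The braided Yang–Baxter
equation is invariant under scalars and under conjugation by `S ⊗ S`, and `B` satisfies it by
direct computation.

For unitarity, orthogonality of the columns of `Q` makes `Qᴴ Q = diag(α, β)` with
`α = |a|² + |c|²`, `β = |b|² + |d|²`, and it also gives `|c| |d| = |a| |b|`, which turns the
norm conditions on `p, q` into `|p| α = β` and `|q| β = α`. These say exactly that `B`
preserves the Hermitian form `Aᴴ A = diag(α, β) ⊗ diag(α, β)`, so `A B A⁻¹` is unitary.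
-/

def cornerBraid (p q : ℂ) : Matrix (Fin 2 × Fin 2) (Fin 2 × Fin 2) ℂ :=
  m44 !![0, 0, 0, p; 0, 1, 0, 0; 0, 0, 1, 0; q, 0, 0, 0]

lemma swapT_apply (x y : Fin 2 × Fin 2) : swapT x y = if x = y.swap then 1 else 0 := by
  fin_cases x <;> fin_cases y <;> rfl

lemma mul_swapT_apply (M : Matrix (Fin 2 × Fin 2) (Fin 2 × Fin 2) ℂ) (x y : Fin 2 × Fin 2) :
    (M * swapT) x y = M x y.swap := by
  simp [mul_apply, swapT_apply]

lemma swapT_mul_apply (M : Matrix (Fin 2 × Fin 2) (Fin 2 × Fin 2) ℂ) (x y : Fin 2 × Fin 2) :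
    (swapT * M) x y = M x.swap y := by
  simp [mul_apply, swapT_apply, ← Prod.swap_eq_iff_eq_swap]

lemma kronecker_mul_swapT (X Y : Matrix (Fin 2) (Fin 2) ℂ) :
    (X ⊗ₖ Y) * swapT = swapT * (Y ⊗ₖ X) := by
  ext ⟨i, j⟩ ⟨k, l⟩
  simp [mul_swapT_apply, swapT_mul_apply, mul_comm]

lemma mul_swapT_eq_cornerBraid (p q : ℂ) :
    m44 !![0, 0, 0, p; 0, 0, 1, 0; 0, 1, 0, 0; q, 0, 0, 0] * swapT = cornerBraid p q := by
  ext x y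
  rw [mul_swapT_apply]
  fin_cases x <;> fin_cases y <;> simp [cornerBraid, m44, toFin4]

lemma mul_conj_mul_conj {M : Type*} [Monoid M] {c c' : M} (h : c' * c = 1) (x y : M) :
    (c * x * c') * (c * y * c') = c * (x * y) * c' := by
  simp only [mul_assoc]
  rw [← mul_assoc c' c, h, one_mul]

lemma braidedYB_smul {B : Matrix (Fin 2 × Fin 2) (Fin 2 × Fin 2) ℂ} (hB : braidedYB B) (k : ℂ) :
    braidedYB (k • B) := by
  unfold braidedYB at *
  rw [smul_kronecker, kronecker_smul, ← coe_reindexAlgEquiv ℂ ℂ, map_smul,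
    coe_reindexAlgEquiv]
  simp only [smul_mul_smul_comm, hB]

lemma braidedYB_conj {B : Matrix (Fin 2 × Fin 2) (Fin 2 × Fin 2) ℂ} (hB : braidedYB B)
    {S : Matrix (Fin 2) (Fin 2) ℂ} (hS : IsUnit S.det) :
    braidedYB ((S ⊗ₖ S) * B * (S ⊗ₖ S)⁻¹) := by
  unfold braidedYB at *
  -- Both legs become conjugates by `S ⊗ S ⊗ S`: the idle factor contributes `S * 1 * S⁻¹ = 1`.
  have hC : S⁻¹ ⊗ₖ (S⁻¹ ⊗ₖ S⁻¹) * S ⊗ₖ (S ⊗ₖ S) = 1 := by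
    simp only [← mul_kronecker_mul, nonsing_inv_mul S hS, one_kronecker_one]
  have h12 : reindex (Equiv.prodAssoc _ _ _) (Equiv.prodAssoc _ _ _)
      (((S ⊗ₖ S) * B * (S ⊗ₖ S)⁻¹) ⊗ₖ (1 : Matrix (Fin 2) (Fin 2) ℂ)) =
      S ⊗ₖ (S ⊗ₖ S) * reindex (Equiv.prodAssoc _ _ _) (Equiv.prodAssoc _ _ _) (B ⊗ₖ 1) *
        S⁻¹ ⊗ₖ (S⁻¹ ⊗ₖ S⁻¹) := by
    rw [inv_kronecker, ← kronecker_assoc, ← kronecker_assoc, ← coe_reindexAlgEquiv ℂ ℂ,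
      ← map_mul, ← map_mul, ← mul_kronecker_mul, ← mul_kronecker_mul, mul_one,
      mul_nonsing_inv S hS]
  have h23 : (1 : Matrix (Fin 2) (Fin 2) ℂ) ⊗ₖ ((S ⊗ₖ S) * B * (S ⊗ₖ S)⁻¹) =
      S ⊗ₖ (S ⊗ₖ S) * (1 ⊗ₖ B) * S⁻¹ ⊗ₖ (S⁻¹ ⊗ₖ S⁻¹) := by
    rw [inv_kronecker, ← mul_kronecker_mul, ← mul_kronecker_mul, mul_one, mul_nonsing_inv S hS]
  simp only [h12, h23, mul_conj_mul_conj hC, hB]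

set_option maxHeartbeats 1000000 in
lemma braidedYB_cornerBraid (p q : ℂ) : braidedYB (cornerBraid p q) := by
  unfold braidedYB
  ext ⟨i, j, l⟩ ⟨i', j', l'⟩
  simp only [mul_apply, Fintype.sum_prod_type, reindex_apply, submatrix_apply,
    kroneckerMap_apply, Equiv.prodAssoc_symm_apply, one_apply, Fin.sum_univ_two, cornerBraid,
    m44, toFin4]
  fin_cases i <;> fin_cases j <;> fin_cases l <;> fin_cases i' <;> fin_cases j' <;> fin_cases l' <;>
    norm_num

lemma conjTranspose_mul_self_conj {n K : Type*} [Fintype n] [DecidableEq n] [CommRing K]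
    [StarRing K] {A : Matrix n n K} (hA : IsUnit A.det) {B : Matrix n n K}
    (hB : Bᴴ * (Aᴴ * A) * B = Aᴴ * A) :
    (A * B * A⁻¹)ᴴ * (A * B * A⁻¹) = 1 := by
  calc (A * B * A⁻¹)ᴴ * (A * B * A⁻¹) = A⁻¹ᴴ * (Bᴴ * (Aᴴ * A) * B) * A⁻¹ := by
        simp only [conjTranspose_mul, Matrix.mul_assoc]
    _ = (A * A⁻¹)ᴴ * (A * A⁻¹) := by
        rw [hB]; simp only [conjTranspose_mul, Matrix.mul_assoc]
    _ = 1 := by rw [mul_nonsing_inv A hA, conjTranspose_one, Matrix.one_mul]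

lemma conjTranspose_smul_mul_smul {m n : Type*} [Fintype m] {k : ℂ} (hk : ‖k‖ = 1)
    (X : Matrix m n ℂ) : (k • X)ᴴ * (k • X) = Xᴴ * X := by
  rw [conjTranspose_smul, Matrix.smul_mul, Matrix.mul_smul, smul_smul, Complex.star_def, Complex.conj_mul', hk]
  simp

lemma conjTranspose_mul_self_of_orthogonal_columns {a b c d : ℂ}
    (hc : a * (starRingEnd ℂ) b + c * (starRingEnd ℂ) d = 0) :
    (!![a, b; c, d] : Matrix (Fin 2) (Fin 2) ℂ)ᴴ * !![a, b; c, d] =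
      diagonal ![((‖a‖ ^ 2 + ‖c‖ ^ 2 : ℝ) : ℂ), ((‖b‖ ^ 2 + ‖d‖ ^ 2 : ℝ) : ℂ)] := by
  have hc' : (starRingEnd ℂ) a * b + (starRingEnd ℂ) c * d = 0 := by
    simpa using congrArg (starRingEnd ℂ) hc
  ext i j
  fin_cases i <;> fin_cases j <;> simp [mul_apply, Complex.conj_mul', hc']
  linear_combination hc

lemma norm_mul_sq_add_sq_of_orthogonal {p a b c d : ℂ}
    (hc : a * (starRingEnd ℂ) b + c * (starRingEnd ℂ) d = 0) (hd : d ≠ 0)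
    (hp : ‖p‖ * ‖a‖ ^ 2 = ‖d‖ ^ 2) : ‖p‖ * (‖a‖ ^ 2 + ‖c‖ ^ 2) = ‖b‖ ^ 2 + ‖d‖ ^ 2 := by
  have hcd : ‖c‖ * ‖d‖ = ‖a‖ * ‖b‖ := by
    simpa using congrArg norm (eq_neg_of_add_eq_zero_right hc)
  have : ‖d‖ ^ 2 * (‖p‖ * ‖c‖ ^ 2) = ‖d‖ ^ 2 * ‖b‖ ^ 2 := by
    linear_combination ‖p‖ * (‖c‖ * ‖d‖ + ‖a‖ * ‖b‖) * hcd + ‖b‖ ^ 2 * hp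
  have hpc := mul_left_cancel₀ (by positivity) this
  linear_combination hp + hpc

lemma cornerBraid_conjTranspose_mul_diagonal_mul (p q : ℂ) (w : Fin 2 → ℂ)
    (hp : starRingEnd ℂ p * p * w 0 ^ 2 = w 1 ^ 2)
    (hq : starRingEnd ℂ q * q * w 1 ^ 2 = w 0 ^ 2) :
    (cornerBraid p q)ᴴ * diagonal (fun x => w x.1 * w x.2) * cornerBraid p q =
      diagonal (fun x => w x.1 * w x.2) := by
  ext ⟨i, j⟩ ⟨k, l⟩
  fin_cases i <;> fin_cases j <;> fin_cases k <;> fin_cases l <;>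
    simp [mul_apply, Fintype.sum_prod_type, cornerBraid, m44, toFin4]
  · linear_combination hq
  · linear_combination hp

theorem family3_unitary_solution (p q k a b c d : ℂ)
    (hk : ‖k‖ = 1)
    (ha : a ≠ 0) (hd : d ≠ 0)
    (hdet : IsUnit (!![a, b; c, d] : Matrix (Fin 2) (Fin 2) ℂ).det)
    (hc : a * (starRingEnd ℂ) b + c * (starRingEnd ℂ) d = 0)
    (hp : ‖p‖ * ‖a‖ ^ 2 = ‖d‖ ^ 2)
    (hq : ‖q‖ * ‖d‖ ^ 2 = ‖a‖ ^ 2) :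
    let Q : Matrix (Fin 2) (Fin 2) ℂ := !![a, b; c, d]
    let A := Q ⊗ₖ Q
    let R := m44 !![0, 0, 0, p; 0, 0, 1, 0; 0, 1, 0, 0; q, 0, 0, 0]
    let M := k • (A * R * A⁻¹ * swapT)
    Mᴴ * M = 1 ∧ braidedYB M := by
  intro Q A R M
  have hM : M = k • (A * cornerBraid p q * A⁻¹) := by
    have hT : A⁻¹ * swapT = swapT * A⁻¹ := by rw [inv_kronecker, kronecker_mul_swapT]
    show k • (A * R * A⁻¹ * swapT) = _
    rw [Matrix.mul_assoc _ A⁻¹, hT, ← Matrix.mul_assoc, Matrix.mul_assoc A, mul_swapT_eq_cornerBraid]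
  refine ⟨?_, hM ▸ braidedYB_smul (braidedYB_conj (braidedYB_cornerBraid p q) hdet) k⟩
  have hA : IsUnit A.det := by
    rw [det_kronecker]
    exact (hdet.pow _).mul (hdet.pow _)
  have hpw := norm_mul_sq_add_sq_of_orthogonal hc hd hp
  have hc' : d * (starRingEnd ℂ) c + b * (starRingEnd ℂ) a = 0 := by
    simpa [mul_comm, add_comm] using congrArg (starRingEnd ℂ) hc
  have hqw := norm_mul_sq_add_sq_of_orthogonal hc' ha hq
  rw [hM, conjTranspose_smul_mul_smul hk]
  refine conjTranspose_mul_self_conj hA ?_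
  rw [conjTranspose_kronecker, ← mul_kronecker_mul,
    conjTranspose_mul_self_of_orthogonal_columns hc, diagonal_kronecker_diagonal]
  apply cornerBraid_conjTranspose_mul_diagonal_mul <;>
    simp only [cons_val_zero, cons_val_one, Complex.conj_mul'] <;> norm_cast
  · rw [← hpw]; ring
  · rw [add_comm (‖a‖ ^ 2), ← hqw]; ring
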